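/- For every τ in the upper half-plane, θ[1;0]·θ[1;1/2]³ − θ[1;1/4]·θ[1;3/4]³ − θ[1;3/4]·θ[1;1/4]³ = 0, where all theta constants are evaluated at (0,τ). -/

import Mathlib

/-!
Put `m = 2n + 1`, `m' = 2n' + 1`. The substitution `p = (m + m') / 2`, `q = (m - m') / 2` splits
a product of two theta constants of characteristic `ε = 1` according to the parity of `p`:
`θ[1;a] θ[1;b] (τ) = θ[0;a+b] θ[1;a-b] (2τ) + θ[1;a+b] θ[0;a-b] (2τ)`.
With `θ[1;-x] = θ[1;x]`, `θ[1;2-x] = -θ[1;x]` (so `θ[1;1] = 0`) and `θ[0;-x] = θ[0;x] = θ[0;2-x]`,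
the products `θ[1;0] θ[1;½]`, `θ[1;½]²`, `θ[1;¼] θ[1;¾]`, `θ[1;¼]²`, `θ[1;¾]²` become
`2AB`, `CB₀`, `CB`, `AB₀ + BA₀`, `AB₀ - BA₀` in `A = θ[0;½]`, `B = θ[1;½]`, `C = θ[0;1]`,
`A₀ = θ[0;0]`, `B₀ = θ[1;0]` at `2τ`, and the identity reads `2AB · CB₀ - CB · 2AB₀ = 0`.
-/

open Complex

/-- Theta function with characteristics `[ε; ε']` of Farkas and Kra. -/
noncomputable def thetaChar (ε ε' : ℝ) (ζ τ : ℂ) : ℂ :=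
  ∑' n : ℤ, Complex.exp (2 * (Real.pi : ℂ) * I *
    ((1 / 2) * ((n : ℂ) + (ε : ℂ) / 2) ^ 2 * τ + ((n : ℂ) + (ε : ℂ) / 2) * (ζ + (ε' : ℂ) / 2)))

open Real

noncomputable def thetaCharTerm (ε ε' : ℝ) (ζ τ : ℂ) (n : ℤ) : ℂ :=
  cexp (2 * (π : ℂ) * I *
    ((1 / 2) * ((n : ℂ) + (ε : ℂ) / 2) ^ 2 * τ + ((n : ℂ) + (ε : ℂ) / 2) * (ζ + (ε' : ℂ) / 2)))

section

variable {ε ε' : ℝ} {ζ τ : ℂ}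

lemma thetaChar_eq_tsum : thetaChar ε ε' ζ τ = ∑' n, thetaCharTerm ε ε' ζ τ n := rfl

lemma thetaCharTerm_eq_mul_jacobiTheta₂_term (n : ℤ) :
    thetaCharTerm ε ε' ζ τ n = cexp (2 * π * I * (ε ^ 2 * τ / 8 + ε / 2 * (ζ + ε' / 2))) *
      jacobiTheta₂_term n (ζ + ε' / 2 + ε * τ / 2) τ := by
  rw [thetaCharTerm, jacobiTheta₂_term, ← Complex.exp_add]
  ring_nf

lemma summable_norm_thetaCharTerm (hτ : 0 < τ.im) :
    Summable fun n ↦ ‖thetaCharTerm ε ε' ζ τ n‖ := by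
  simp only [thetaCharTerm_eq_mul_jacobiTheta₂_term, norm_mul]
  exact ((summable_norm_iff.mpr ((summable_jacobiTheta₂_term_iff _ τ).mpr hτ)).mul_left _)

lemma hasSum_thetaCharTerm (hτ : 0 < τ.im) :
    HasSum (thetaCharTerm ε ε' ζ τ) (thetaChar ε ε' ζ τ) :=
  (summable_norm_thetaCharTerm hτ).of_norm.hasSum

lemma hasSum_thetaCharTerm_mul {ε₂ ε₂' : ℝ} {ζ₂ : ℂ} (hτ : 0 < τ.im) :
    HasSum (fun p : ℤ × ℤ ↦ thetaCharTerm ε ε' ζ τ p.1 * thetaCharTerm ε₂ ε₂' ζ₂ τ p.2)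
      (thetaChar ε ε' ζ τ * thetaChar ε₂ ε₂' ζ₂ τ) :=
  (hasSum_thetaCharTerm hτ).mul (hasSum_thetaCharTerm hτ)
    (summable_mul_of_summable_norm (summable_norm_thetaCharTerm hτ)
      (summable_norm_thetaCharTerm hτ))

lemma thetaChar_neg : thetaChar (-ε) (-ε') (-ζ) τ = thetaChar ε ε' ζ τ := by
  rw [thetaChar_eq_tsum, ← (Equiv.neg ℤ).tsum_eq]
  refine tsum_congr fun n ↦ ?_
  simp only [thetaCharTerm, Equiv.neg_apply]
  push_cast
  ring_nf

lemma thetaChar_add_two_left : thetaChar (ε + 2) ε' ζ τ = thetaChar ε ε' ζ τ := by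
  rw [thetaChar_eq_tsum, thetaChar_eq_tsum,
    ← (Equiv.addRight (1 : ℤ)).tsum_eq (thetaCharTerm ε ε' ζ τ)]
  refine tsum_congr fun n ↦ ?_
  simp only [thetaCharTerm, Equiv.coe_addRight]
  push_cast
  ring_nf

lemma thetaChar_add_two_right :
    thetaChar ε (ε' + 2) ζ τ = cexp (π * I * ε) * thetaChar ε ε' ζ τ := by
  rw [thetaChar_eq_tsum, thetaChar_eq_tsum, ← tsum_mul_left]
  refine tsum_congr fun n ↦ ?_
  rw [thetaCharTerm, thetaCharTerm, ← Complex.exp_add, Complex.exp_eq_exp_iff_exists_int]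
  exact ⟨n, by push_cast; ring⟩

lemma thetaChar_zero_neg (x : ℝ) : thetaChar 0 (-x) 0 τ = thetaChar 0 x 0 τ := by
  simpa using thetaChar_neg (ε := 0) (ε' := x) (ζ := 0) (τ := τ)

lemma thetaChar_one_neg (x : ℝ) : thetaChar 1 (-x) 0 τ = thetaChar 1 x 0 τ := by
  rw [← thetaChar_neg, ← thetaChar_add_two_left, neg_neg, neg_zero]
  norm_num

lemma thetaChar_zero_two_sub (x : ℝ) : thetaChar 0 (2 - x) 0 τ = thetaChar 0 x 0 τ := by
  rw [sub_eq_neg_add, thetaChar_add_two_right, thetaChar_zero_neg]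
  simp

lemma thetaChar_one_two_sub (x : ℝ) : thetaChar 1 (2 - x) 0 τ = -thetaChar 1 x 0 τ := by
  rw [sub_eq_neg_add, thetaChar_add_two_right, thetaChar_one_neg]
  simp

lemma thetaChar_one_one : thetaChar 1 1 0 τ = 0 := by
  have h := thetaChar_one_two_sub (τ := τ) 1
  norm_num at h
  linear_combination h / 2

end

/-- Pairs of odd integers `(2n+1, 2n'+1)` with half-sum `p` and half-difference `q`: on the left
summand `(p, q) = (2j, 2k+1)`, on the right summand `(p, q) = (2j+1, 2k)`. -/
def oddPairEquiv : (ℤ × ℤ) ⊕ (ℤ × ℤ) ≃ ℤ × ℤ where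
  toFun := Sum.elim (fun x ↦ (x.1 + x.2, x.1 - x.2 - 1)) (fun x ↦ (x.1 + x.2, x.1 - x.2))
  invFun x := if (x.1 + x.2) % 2 = 1
    then .inl ((x.1 + x.2 + 1) / 2, x.1 - (x.1 + x.2 + 1) / 2)
    else .inr ((x.1 + x.2 + 1) / 2, x.1 - (x.1 + x.2 + 1) / 2)
  left_inv := by
    rintro (⟨j, k⟩ | ⟨j, k⟩) <;> dsimp only [Sum.elim_inl, Sum.elim_inr]
    · rw [if_pos (by omega)]
      simp only [Sum.inl.injEq, Prod.mk.injEq]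
      omega
    · rw [if_neg (by omega)]
      simp only [Sum.inr.injEq, Prod.mk.injEq]
      omega
  right_inv := by
    rintro ⟨n, n'⟩
    by_cases h : (n + n') % 2 = 1
    · simp only [if_pos h, Sum.elim_inl, Prod.mk.injEq]
      omega
    · simp only [if_neg h, Sum.elim_inr, Prod.mk.injEq]
      omega

theorem thetaChar_one_mul_thetaChar_one {a b : ℝ} {ζ ζ' τ : ℂ} (hτ : 0 < τ.im) :
    thetaChar 1 a ζ τ * thetaChar 1 b ζ' τ =
      thetaChar 0 (a + b) (ζ + ζ') (2 * τ) * thetaChar 1 (a - b) (ζ - ζ') (2 * τ) +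
        thetaChar 1 (a + b) (ζ + ζ') (2 * τ) * thetaChar 0 (a - b) (ζ - ζ') (2 * τ) := by
  have h2τ : 0 < (2 * τ).im := by simpa using hτ
  set f : ℤ × ℤ → ℂ := fun p ↦ thetaCharTerm 1 a ζ τ p.1 * thetaCharTerm 1 b ζ' τ p.2
  set g : ℤ × ℤ → ℂ := fun p ↦
    thetaCharTerm 0 (a + b) (ζ + ζ') (2 * τ) p.1 * thetaCharTerm 1 (a - b) (ζ - ζ') (2 * τ) p.2
  set h : ℤ × ℤ → ℂ := fun p ↦
    thetaCharTerm 1 (a + b) (ζ + ζ') (2 * τ) p.1 * thetaCharTerm 0 (a - b) (ζ - ζ') (2 * τ) p.2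
  have hterm : f ∘ oddPairEquiv = Sum.elim g h := by
    ext (⟨j, k⟩ | ⟨j, k⟩) <;>
    · simp only [f, g, h, Function.comp_apply, oddPairEquiv, Equiv.coe_fn_mk, Sum.elim_inl,
        Sum.elim_inr, thetaCharTerm, ← Complex.exp_add]
      push_cast
      ring_nf
  have hsum : HasSum (Sum.elim g h) _ :=
    HasSum.sum (f := Sum.elim g h) (hasSum_thetaCharTerm_mul h2τ) (hasSum_thetaCharTerm_mul h2τ)
  rw [← hterm, oddPairEquiv.hasSum_iff] at hsum
  exact (hasSum_thetaCharTerm_mul hτ).unique hsum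

theorem stmt_13 (τ : ℂ) (hτ : 0 < τ.im) :
    thetaChar 1 0 0 τ * thetaChar 1 (1/2) 0 τ ^ 3
      - thetaChar 1 (1/4) 0 τ * thetaChar 1 (3/4) 0 τ ^ 3
      - thetaChar 1 (3/4) 0 τ * thetaChar 1 (1/4) 0 τ ^ 3 = 0 := by
  have h02 := thetaChar_one_mul_thetaChar_one (a := 0) (b := 1/2) (ζ := 0) (ζ' := 0) hτ
  have h22 := thetaChar_one_mul_thetaChar_one (a := 1/2) (b := 1/2) (ζ := 0) (ζ' := 0) hτ
  have h13 := thetaChar_one_mul_thetaChar_one (a := 1/4) (b := 3/4) (ζ := 0) (ζ' := 0) hτ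
  have h11 := thetaChar_one_mul_thetaChar_one (a := 1/4) (b := 1/4) (ζ := 0) (ζ' := 0) hτ
  have h33 := thetaChar_one_mul_thetaChar_one (a := 3/4) (b := 3/4) (ζ := 0) (ζ' := 0) hτ
  norm_num [thetaChar_zero_neg, thetaChar_one_neg, thetaChar_one_one] at h02 h22 h13 h11 h33
  rw [show (3 / 2 : ℝ) = 2 - 1 / 2 by norm_num, thetaChar_zero_two_sub,
    thetaChar_one_two_sub] at h33
  generalize thetaChar 1 0 0 τ = t₀ at *
  generalize thetaChar 1 (1 / 4) 0 τ = t₁ at *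
  generalize thetaChar 1 (1 / 2) 0 τ = t₂ at *
  generalize thetaChar 1 (3 / 4) 0 τ = t₃ at *
  generalize thetaChar 0 (1 / 2) 0 (2 * τ) = a at *
  generalize thetaChar 1 (1 / 2) 0 (2 * τ) = b at *
  generalize thetaChar 0 1 0 (2 * τ) = c at *
  linear_combination t₂ ^ 2 * h02 + 2 * a * b * h22 - (t₁ ^ 2 + t₃ ^ 2) * h13 - c * b * (h11 + h33)
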